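/- For every n ≥ 1, every strong function f : 2^N → {0,1} with f(∅) = 0 on n voters is max(1, n−1)-roughly weighted, i.e. μ(f) ≤ max(1, n−1). Moreover, for every n ≥ 3 there exists a strong function f : 2^N → {0,1} with f(∅) = 0 such that μ(f) = n − 1; hence the maximum of μ(f) over all strong functions f with f(∅) = 0 on n ≥ 3 voters equals n − 1. -/

import Mathlib

open Finset

/-- `f` is `α`-roughly weighted: there are real weights such that every winning
coalition has weight at least `1` and every losing coalition weight at most `α`. -/
def RoughlyWeighted {n : ℕ} (f : Finset (Fin n) → Bool) (α : ℝ) : Prop :=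
  ∃ w : Fin n → ℝ,
    (∀ S : Finset (Fin n), f S = true → 1 ≤ ∑ i ∈ S, w i) ∧
    (∀ S : Finset (Fin n), f S = false → ∑ i ∈ S, w i ≤ α)

/-- The critical threshold value `μ(f)`: the smallest `α ≥ 1` such that `f` is
`α`-roughly weighted. -/
noncomputable def mu {n : ℕ} (f : Finset (Fin n) → Bool) : ℝ :=
  sInf {α : ℝ | 1 ≤ α ∧ RoughlyWeighted f α}

/-- A simple game: monotone, the empty coalition loses and the grand coalition wins. -/
def SimpleGame {n : ℕ} (χ : Finset (Fin n) → Bool) : Prop :=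
  χ ∅ = false ∧ χ Finset.univ = true ∧
    ∀ S T : Finset (Fin n), S ⊆ T → χ S = true → χ T = true

/-- A function is strong if the complement of every losing coalition is winning. -/
def Strong {n : ℕ} (f : Finset (Fin n) → Bool) : Prop :=
  ∀ S : Finset (Fin n), f S = false → f Sᶜ = true

/-!
With all weights equal to `1`, a winning coalition of a function with `f ∅ = 0` is nonempty,
and a losing coalition of a strong one is not the grand coalition (whose complement `∅` loses),
so it has at most `n - 1` members. Conversely, the function whose only losing coalitions are `∅`
and `N ∖ {i}` is strong, and for `n ≥ 3` every singleton inside `N ∖ {i}` wins, so any roughly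
weighted representation gives `N ∖ {i}` weight at least `n - 1`.
-/

variable {n : ℕ} {f : Finset (Fin n) → Bool} {α β : ℝ}

theorem RoughlyWeighted.mono (hf : RoughlyWeighted f α) (hαβ : α ≤ β) : RoughlyWeighted f β := by
  obtain ⟨w, hwin, hlose⟩ := hf
  exact ⟨w, hwin, fun S hS => (hlose S hS).trans hαβ⟩

theorem RoughlyWeighted.card_le {S : Finset (Fin n)} (hf : RoughlyWeighted f α)
    (hS : f S = false) (hsingle : ∀ j ∈ S, f {j} = true) : (#S : ℝ) ≤ α := by
  obtain ⟨w, hwin, hlose⟩ := hf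
  have hw : ∀ j ∈ S, 1 ≤ w j := fun j hj => by simpa using hwin {j} (hsingle j hj)
  calc (#S : ℝ) ≤ ∑ j ∈ S, w j := by simpa using card_nsmul_le_sum S w 1 hw
    _ ≤ α := hlose S hS

theorem mu_le_of_roughlyWeighted (hα : 1 ≤ α) (hf : RoughlyWeighted f α) : mu f ≤ α :=
  csInf_le ⟨1, fun _ hβ => hβ.1⟩ ⟨hα, hf⟩

theorem mu_eq_of_roughlyWeighted (hα : 1 ≤ α) (hf : RoughlyWeighted f α)
    (hmin : ∀ β, RoughlyWeighted f β → α ≤ β) : mu f = α :=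
  IsLeast.csInf_eq ⟨⟨hα, hf⟩, fun β hβ => hmin β hβ.2⟩

theorem Strong.roughlyWeighted_card_sub_one (hs : Strong f) (h0 : f ∅ = false) :
    RoughlyWeighted f ((n : ℝ) - 1) := by
  refine ⟨fun _ => 1, fun S hS => ?_, fun S hS => ?_⟩
  · have hne : S.Nonempty := nonempty_iff_ne_empty.mpr (by rintro rfl; simp [h0] at hS)
    simpa using hne.card_pos
  · have hS_ne : S ≠ univ := by
      rintro rfl
      simpa [h0] using hs univ hS
    have hlt : #S < n := by simpa using (card_lt_iff_ne_univ S).mpr hS_ne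
    have : (#S : ℝ) + 1 ≤ n := by exact_mod_cast hlt
    simp only [sum_const, nsmul_eq_mul, mul_one]
    linarith

def extremalStrong (i : Fin n) (S : Finset (Fin n)) : Bool :=
  decide (S ≠ ∅ ∧ S ≠ {i}ᶜ)

theorem extremalStrong_eq_false_iff {i : Fin n} {S : Finset (Fin n)} :
    extremalStrong i S = false ↔ S = ∅ ∨ S = {i}ᶜ := by
  simp only [extremalStrong, decide_eq_false_iff_not]
  tauto

theorem extremalStrong_empty (i : Fin n) : extremalStrong i ∅ = false :=
  extremalStrong_eq_false_iff.mpr (Or.inl rfl)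

theorem strong_extremalStrong (i : Fin n) : Strong (extremalStrong i) := by
  intro S hS
  have hi : i ∉ ({i}ᶜ : Finset (Fin n)) := by simp
  rcases extremalStrong_eq_false_iff.mp hS with rfl | rfl
  · rw [compl_empty]
    exact decide_eq_true ⟨ne_empty_of_mem (mem_univ i), fun h => hi (h ▸ mem_univ i)⟩
  · rw [compl_compl]
    exact decide_eq_true ⟨singleton_ne_empty i, fun h => hi (h ▸ mem_singleton_self i)⟩

theorem mu_extremalStrong (hn : 3 ≤ n) (i : Fin n) :
    mu (extremalStrong i) = (n : ℝ) - 1 := by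
  have hn' : (3 : ℝ) ≤ n := by exact_mod_cast hn
  have hcard : (#({i}ᶜ : Finset (Fin n)) : ℝ) = (n : ℝ) - 1 := by
    rw [card_compl, card_singleton, Fintype.card_fin, Nat.cast_sub (by omega), Nat.cast_one]
  have hwin : ∀ j ∈ ({i}ᶜ : Finset (Fin n)), extremalStrong i {j} = true := by
    refine fun j _ => decide_eq_true ⟨singleton_ne_empty j, fun hj => ?_⟩
    have : (1 : ℝ) = (n : ℝ) - 1 := by rw [← hcard, ← hj, card_singleton, Nat.cast_one]
    linarith
  refine mu_eq_of_roughlyWeighted (by linarith)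
    ((strong_extremalStrong i).roughlyWeighted_card_sub_one (extremalStrong_empty i))
    fun β hβ => hcard ▸ hβ.card_le (extremalStrong_eq_false_iff.mpr (Or.inr rfl)) hwin

theorem strong_boolean_max_critical_threshold_general (n : ℕ) :
    (∀ f : Finset (Fin n) → Bool, Strong f → f ∅ = false →
      RoughlyWeighted f (max 1 ((n : ℝ) - 1)) ∧ mu f ≤ max 1 ((n : ℝ) - 1)) ∧
    (3 ≤ n → (∃ f : Finset (Fin n) → Bool, Strong f ∧ f ∅ = false ∧
        mu f = (n : ℝ) - 1) ∧
      IsGreatest {α : ℝ | ∃ f : Finset (Fin n) → Bool, Strong f ∧ f ∅ = false ∧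
        α = mu f} ((n : ℝ) - 1)) := by
  refine ⟨fun f hs h0 => ?_, fun hn => ?_⟩
  · have hf := (hs.roughlyWeighted_card_sub_one h0).mono (le_max_right 1 _)
    exact ⟨hf, mu_le_of_roughlyWeighted (le_max_left _ _) hf⟩
  · let i : Fin n := ⟨0, by omega⟩
    have hmu := mu_extremalStrong hn i
    refine ⟨⟨_, strong_extremalStrong i, extremalStrong_empty i, hmu⟩,
      ⟨_, strong_extremalStrong i, extremalStrong_empty i, hmu.symm⟩, ?_⟩
    rintro _ ⟨f, hs, h0, rfl⟩
    have h1 : (1 : ℝ) ≤ (n : ℝ) - 1 := by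
      have : (3 : ℝ) ≤ n := by exact_mod_cast hn
      linarith
    exact mu_le_of_roughlyWeighted h1 (hs.roughlyWeighted_card_sub_one h0)

/-- every strong function with `f ∅ = 0` on `n ≥ 1` voters is
`max(1, n-1)`-roughly weighted, and for `n ≥ 3` the bound `n - 1` is attained, so
the maximum of `μ(f)` over strong functions with `f ∅ = 0` equals `n - 1`. -/
theorem strong_boolean_max_critical_threshold (n : ℕ) (hn : 1 ≤ n) :
    (∀ f : Finset (Fin n) → Bool, Strong f → f ∅ = false →
      RoughlyWeighted f (max 1 ((n : ℝ) - 1)) ∧ mu f ≤ max 1 ((n : ℝ) - 1)) ∧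
    (3 ≤ n → (∃ f : Finset (Fin n) → Bool, Strong f ∧ f ∅ = false ∧
        mu f = (n : ℝ) - 1) ∧
      IsGreatest {α : ℝ | ∃ f : Finset (Fin n) → Bool, Strong f ∧ f ∅ = false ∧
        α = mu f} ((n : ℝ) - 1)) :=
  strong_boolean_max_critical_threshold_general n
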